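/- arXiv:1706.06545 — 2 statements merged into one kernel-verified Lean document; each statement's English description precedes it below -/
import Mathlib

section
/- In a stably Gelfand quantale Q, the set of two-sided elements is closed under multiplication, and for two-sided elements a, b one has ab = a ∧ b. -/
/-- An involutive quantale: a complete lattice with an associative multiplication
distributing over arbitrary joins in each variable, and a join-preserving
involution that is an anti-automorphism of period 2. -/
class InvQuantale (Q : Type*) extends CompleteLattice Q, Semigroup Q, StarMul Q where
  mul_sSup : ∀ (a : Q) (S : Set Q), a * sSup S = ⨆ s ∈ S, a * s
  sSup_mul : ∀ (S : Set Q) (a : Q), sSup S * a = ⨆ s ∈ S, s * a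
  star_sSup : ∀ (S : Set Q), star (sSup S) = ⨆ s ∈ S, star s

/-- The set `I_b(Q)` of partial units relative to `b`. -/
def Ib {Q : Type*} [InvQuantale Q] (b : Q) : Set Q :=
  {a | star a * a ≤ b ∧ a * star a ≤ b ∧ a * b ≤ a ∧ b * a ≤ a}

/-- `Q` is stably Gelfand if `a a* a ≤ a` implies `a a* a = a`. -/
def IsStablyGelfand (Q : Type*) [InvQuantale Q] : Prop :=
  ∀ a : Q, a * star a * a ≤ a → a * star a * a = a

/-! In a stably Gelfand quantale every right-sided element `c` is idempotent: `c c* c ≤ c ⊤ ≤ c`,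
so `c = c c* c ≤ c c ≤ c ⊤ ≤ c`. For `c = a ⊓ b` this gives `a ⊓ b = c c ≤ a b`; the reverse
inequality `a b ≤ a ⊓ b` only needs `a` right-sided and `b` left-sided. -/

instance InvQuantale.toIsQuantale (Q : Type*) [InvQuantale Q] : IsQuantale Q :=
  ⟨InvQuantale.mul_sSup, InvQuantale.sSup_mul⟩

section OrderedSemigroup

variable {α : Type*} [Semigroup α] [Preorder α] [OrderTop α] {a b : α}

theorem mul_le_of_mul_top_le [MulLeftMono α] (ha : a * ⊤ ≤ a) (b : α) : a * b ≤ a :=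
  (mul_le_mul_right le_top a).trans ha

theorem mul_le_of_top_mul_le [MulRightMono α] (hb : ⊤ * b ≤ b) (a : α) : a * b ≤ b :=
  (mul_le_mul_left le_top b).trans hb

theorem mul_mul_top_le [MulLeftMono α] (a : α) (hb : b * ⊤ ≤ b) : a * b * ⊤ ≤ a * b := by
  rw [mul_assoc]
  exact mul_le_mul_right hb a

theorem top_mul_mul_le [MulRightMono α] (ha : ⊤ * a ≤ a) (b : α) : ⊤ * (a * b) ≤ a * b := by
  rw [← mul_assoc]
  exact mul_le_mul_left ha b

end OrderedSemigroup

theorem inf_mul_top_le {α : Type*} [Semigroup α] [SemilatticeInf α] [OrderTop α]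
    [MulRightMono α] {a b : α} (ha : a * ⊤ ≤ a) (hb : b * ⊤ ≤ b) : (a ⊓ b) * ⊤ ≤ a ⊓ b :=
  le_inf ((mul_le_mul_left inf_le_left ⊤).trans ha) ((mul_le_mul_left inf_le_right ⊤).trans hb)

theorem IsStablyGelfand.mul_self_eq_of_mul_top_le {Q : Type*} [InvQuantale Q]
    (h : IsStablyGelfand Q) {c : Q} (hc : c * ⊤ ≤ c) : c * c = c := by
  have hgelfand : c * star c * c ≤ c := by
    rw [mul_assoc]
    exact mul_le_of_mul_top_le hc _
  refine (mul_le_of_mul_top_le hc c).antisymm ?_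
  calc c = c * star c * c := (h c hgelfand).symm
    _ ≤ c * c := mul_le_mul_left (mul_le_of_mul_top_le hc _) c

theorem twoSided_mul_eq_inf {Q : Type*} [InvQuantale Q]
    (h : IsStablyGelfand Q) (a b : Q)
    (ha1 : a * ⊤ ≤ a) (ha2 : ⊤ * a ≤ a) (hb1 : b * ⊤ ≤ b) (hb2 : ⊤ * b ≤ b) :
    (a * b * ⊤ ≤ a * b ∧ ⊤ * (a * b) ≤ a * b) ∧ a * b = a ⊓ b := by
  refine ⟨⟨mul_mul_top_le a hb1, top_mul_mul_le ha2 b⟩, ?_⟩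
  refine (le_inf (mul_le_of_mul_top_le ha1 b) (mul_le_of_top_mul_le hb2 a)).antisymm ?_
  calc a ⊓ b = (a ⊓ b) * (a ⊓ b) := (h.mul_self_eq_of_mul_top_le (inf_mul_top_le ha1 hb1)).symm
    _ ≤ a * b := mul_le_mul' inf_le_left inf_le_right
end

section
/- Let Q be a stably Gelfand quantale and b ∈ Q a projection. Then the idempotents of the semigroup I_b(Q) are exactly the two-sided elements of the subquantale ↓b: an element f ∈ I_b(Q) satisfies f·f = f if and only if f·b ≤ f, b·f ≤ f, and f ≤ b. -/
/-!
Stable Gelfandness turns `f f* f ≤ b f ≤ f` into `f f* f = f`, and everything follows from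
this identity. An idempotent `f` satisfies `f = f (f* f*) f = (f f*)(f* f) ≤ b b = b`.
Conversely, `f ≤ b` gives `f* ≤ b`, hence `f = f f* f ≤ f b f ≤ f f ≤ f b ≤ f`.
-/

namespace InvQuantale

variable {Q : Type*} [InvQuantale Q]

theorem mul_sup (a x y : Q) : a * (x ⊔ y) = a * x ⊔ a * y := by
  rw [← sSup_pair, mul_sSup, iSup_pair]

theorem sup_mul (x y a : Q) : (x ⊔ y) * a = x * a ⊔ y * a := by
  rw [← sSup_pair, sSup_mul, iSup_pair]

theorem star_sup (x y : Q) : star (x ⊔ y) = star x ⊔ star y := by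
  rw [← sSup_pair, star_sSup, iSup_pair]

instance : MulLeftMono Q where
  elim a x y hxy := calc
    a * x ≤ a * x ⊔ a * y := le_sup_left
    _ = a * y := by rw [← mul_sup, sup_eq_right.mpr hxy]

instance : MulRightMono Q where
  elim a x y hxy := calc
    x * a ≤ x * a ⊔ y * a := le_sup_left
    _ = y * a := by rw [← sup_mul, sup_eq_right.mpr hxy]

theorem star_mono : Monotone (star : Q → Q) := fun x y hxy => calc
  star x ≤ star x ⊔ star y := le_sup_left
  _ = star y := by rw [← star_sup, sup_eq_right.mpr hxy]

end InvQuantale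

section PartialUnits

open InvQuantale

variable {Q : Type*} [InvQuantale Q] {a b : Q}

theorem IsStablyGelfand.mul_star_mul_eq_self (h : IsStablyGelfand Q)
    (hab : a * star a ≤ b) (hba : b * a ≤ a) : a * star a * a = a :=
  h a ((mul_le_mul_left hab a).trans hba)

theorem le_of_isIdempotentElem_of_mul_star_mul_eq_self (ha : IsIdempotentElem a)
    (ha' : a * star a * a = a) (hb : IsIdempotentElem b)
    (hstar_mul : star a * a ≤ b) (hmul_star : a * star a ≤ b) : a ≤ b := calc
  a = a * star a * a := ha'.symm
  _ = a * (star a * star a) * a := by rw [← star_mul, ha.eq]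
  _ = (a * star a) * (star a * a) := by simp only [mul_assoc]
  _ ≤ b * b := mul_le_mul' hmul_star hstar_mul
  _ = b := hb.eq

theorem isIdempotentElem_of_mul_star_mul_eq_self (ha' : a * star a * a = a)
    (hb : star b = b) (hab : a * b ≤ a) (hle : a ≤ b) : IsIdempotentElem a := by
  have hstar_le : star a ≤ b := hb ▸ star_mono hle
  refine le_antisymm ((mul_le_mul_right hle a).trans hab) ?_
  calc a = a * star a * a := ha'.symm
    _ ≤ a * b * a := mul_le_mul_left (mul_le_mul_right hstar_le a) a
    _ ≤ a * a := mul_le_mul_left hab a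

end PartialUnits

theorem Ib_idempotents_eq_twoSided_of_down {Q : Type*} [InvQuantale Q]
    (h : IsStablyGelfand Q) (b : Q) (hb : b * b = b) (hb' : star b = b)
    (f : Q) (hf : f ∈ Ib b) :
    f * f = f ↔ (f * b ≤ f ∧ b * f ≤ f ∧ f ≤ b) := by
  obtain ⟨hstar_mul, hmul_star, hfb, hbf⟩ := hf
  have hpartial : f * star f * f = f := h.mul_star_mul_eq_self hmul_star hbf
  refine ⟨fun hff => ⟨hfb, hbf, ?_⟩, fun ⟨_, _, hle⟩ => ?_⟩
  · exact le_of_isIdempotentElem_of_mul_star_mul_eq_self hff hpartial hb hstar_mul hmul_star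
  · exact isIdempotentElem_of_mul_star_mul_eq_self hpartial hb' hfb hle
end
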